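/- arXiv:2301.00398 — 5 statements merged into one kernel-verified Lean document; each statement's English description precedes it below -/
import Mathlib

section
/- For every integer d ≥ 1 and all indices 1 ≤ i, j ≤ d, the limit D_{i,j} := lim_{N→∞} (1/log N) · Σ_{z∈ℤ^d, 0<‖z‖≤N} z_i z_j p(z) exists and is a finite real number, where p is the kernel with exponent α = 2; moreover D_{i,j} = 0 whenever i ≠ j. -/
/-!
Reflecting a coordinate other than the first leaves `p` invariant and changes the sign of
`z_i z_j`, so the off-diagonal sums vanish. On the diagonal, pairing `z` with `-z` replaces the
asymmetric weight by its mean `2`, and averaging over coordinate permutations turns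
`∑ z_i² ‖z‖^{-(d+2)}` into `(1/d) ∑ ‖z‖^{-d}`. Abel summation in the squared norm `k`, with the
lattice point count `#{0 < ‖z‖² ≤ k} ~ ω_d k^{d/2}` obtained by comparing unit cubes with balls,
gives `∑_{0<‖z‖≤N} ‖z‖^{-d} ~ d ω_d log N`. Hence `D_{ii} = ω_d`, the volume of the unit ball.
-/

/-- Euclidean norm of a point of `ℤ^d`. -/
noncomputable def znorm (d : ℕ) (z : Fin d → ℤ) : ℝ :=
  Real.sqrt (∑ i, ((z i : ℝ)) ^ 2)

/-- The jump kernel `p(z) = ‖z‖^{-(d+α)} (2·1_{z₁>0} + 1_{z₁=0})`, `p(0) = 0`. -/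
noncomputable def pker (d : ℕ) [NeZero d] (α : ℝ) (z : Fin d → ℤ) : ℝ :=
  if z = 0 then 0
  else znorm d z ^ (-((d : ℝ) + α)) *
    ((if 0 < z 0 then (2 : ℝ) else 0) + (if z 0 = 0 then 1 else 0))

open Filter Topology Finset MeasureTheory Metric Real

/-- Abel summation over the values of `q`. -/
theorem Finset.sum_comp_eq_sum_range_card_filter_le_mul_sub {α : Type*} (s : Finset α) (q : α → ℕ)
    (g : ℕ → ℝ) {M : ℕ} (hq : ∀ x ∈ s, q x ≤ M) :
    ∑ x ∈ s, g (q x) =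
      ∑ k ∈ range M, (#{x ∈ s | q x ≤ k} : ℝ) * (g k - g (k + 1)) + #s * g M := by
  have htel : ∀ x ∈ s, g (q x) = ∑ k ∈ range M, (if q x ≤ k then g k - g (k + 1) else 0) + g M := by
    intro x hx
    rw [← sum_filter, show {k ∈ range M | q x ≤ k} = Ico (q x) M by ext; simp; omega]
    have := sum_Ico_sub (fun k => -g k) (hq x hx)
    simp only [neg_sub_neg] at this
    linarith
  rw [sum_congr rfl htel, sum_add_distrib, sum_comm, sum_const, nsmul_eq_mul]
  congr 1
  refine sum_congr rfl fun k _ => ?_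
  rw [← sum_filter, sum_const, nsmul_eq_mul]

/-- Stolz–Cesàro, with increments `log (k + 1) - log k` that telescope to `log n`. -/
lemma tendsto_sum_range_div_log {a : ℕ → ℝ} {c : ℝ}
    (h : Tendsto (fun k : ℕ => a k / (log (k + 1) - log k)) atTop (𝓝 c)) :
    Tendsto (fun n : ℕ => (∑ k ∈ range n, a k) / log n) atTop (𝓝 c) := by
  set L : ℕ → ℝ := fun k => log (k + 1) - log k
  have hL : 0 ≤ L := fun k => by
    rcases k.eq_zero_or_pos with rfl | hk
    · simp [L]
    · exact sub_nonneg.2 (log_le_log (by positivity) (by linarith))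
  have hLpos : ∀ᶠ k : ℕ in atTop, 0 < L k := by
    filter_upwards [eventually_ge_atTop 1] with k hk
    exact sub_pos.2 (log_lt_log (by positivity) (by linarith))
  have hsum : ∀ n, ∑ k ∈ range n, L k = log n := fun n => by
    simpa [L] using sum_range_sub (fun k : ℕ => log k) n
  have hlog : Tendsto (fun n : ℕ => log n) atTop atTop :=
    tendsto_log_atTop.comp tendsto_natCast_atTop_atTop
  have ho : (fun k => a k - c * L k) =o[atTop] L := by
    rw [Asymptotics.isLittleO_iff_tendsto' (hLpos.mono fun k hk h => absurd h hk.ne'),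
      ← sub_self c]
    refine (h.sub_const c).congr' (hLpos.mono fun k hk => ?_)
    change a k / L k - c = (a k - c * L k) / L k
    rw [sub_div, mul_div_cancel_right₀ _ hk.ne']
  have := (ho.sum_range hL (by simpa only [hsum] using hlog)).tendsto_div_nhds_zero.add_const c
  simp only [sum_sub_distrib, ← mul_sum, hsum, zero_add] at this
  refine this.congr' ((hlog.eventually_gt_atTop 0).mono fun n hn => ?_)
  field_simp
  ring

lemma tendsto_rpow_mul_sub_rpow_div_log_sub (β : ℝ) :
    Tendsto (fun k : ℕ => (k : ℝ) ^ β * ((k : ℝ) ^ (-β) - ((k : ℝ) + 1) ^ (-β)) /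
      (log (k + 1) - log k)) atTop (𝓝 β) := by
  have hderiv : HasDerivAt (fun t => -exp (-(β * t))) β 0 := by
    simpa using (((hasDerivAt_id (0 : ℝ)).const_mul β).fun_neg.exp).fun_neg
  have hL : Tendsto (fun k : ℕ => log (k + 1) - log k) atTop (𝓝[≠] 0) := by
    refine tendsto_nhdsWithin_iff.2 ⟨tendsto_log_nat_add_one_sub_log, ?_⟩
    filter_upwards [eventually_ge_atTop 1] with k hk
    exact (sub_pos.2 (log_lt_log (by positivity) (by linarith))).ne'
  -- the numerator is `1 - exp (-β (log (k + 1) - log k))`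
  refine (hderiv.tendsto_slope_zero.comp hL).congr' ?_
  filter_upwards [eventually_ge_atTop 1] with k hk
  have hk0 : (0 : ℝ) < k := by exact_mod_cast hk
  rw [Function.comp_apply, rpow_def_of_pos hk0, rpow_def_of_pos hk0, rpow_def_of_pos (by linarith),
    mul_sub, ← exp_add, ← exp_add, smul_eq_mul, div_eq_inv_mul]
  ring_nf

namespace LatticeKernel

variable {d : ℕ}

def sqNorm (z : Fin d → ℤ) : ℕ := ∑ i, (z i).natAbs ^ 2

lemma cast_sqNorm (z : Fin d → ℤ) : (sqNorm z : ℝ) = ∑ i, (z i : ℝ) ^ 2 := by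
  simp [sqNorm, Nat.cast_natAbs, sq_abs]

lemma sqNorm_eq_zero_iff {z : Fin d → ℤ} : sqNorm z = 0 ↔ z = 0 := by
  simp [sqNorm, Finset.sum_eq_zero_iff, funext_iff]

lemma sqNorm_congr {z w : Fin d → ℤ} (h : ∀ i, (w i).natAbs = (z i).natAbs) :
    sqNorm w = sqNorm z := by
  simp only [sqNorm, h]

lemma sqNorm_neg (z : Fin d → ℤ) : sqNorm (-z) = sqNorm z :=
  sqNorm_congr fun i => Int.natAbs_neg (z i)

lemma sqNorm_comp_perm (z : Fin d → ℤ) (σ : Equiv.Perm (Fin d)) : sqNorm (z ∘ σ) = sqNorm z :=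
  Equiv.sum_comp σ fun i => (z i).natAbs ^ 2

lemma znorm_eq_sqrt_sqNorm (z : Fin d → ℤ) : znorm d z = √(sqNorm z) := by
  rw [znorm, cast_sqNorm]

lemma znorm_le_natCast_iff {z : Fin d → ℤ} {N : ℕ} : znorm d z ≤ N ↔ sqNorm z ≤ N ^ 2 := by
  rw [znorm_eq_sqrt_sqNorm, Real.sqrt_le_left (Nat.cast_nonneg N)]
  exact_mod_cast Iff.rfl

noncomputable def latticeBall (d k : ℕ) : Finset (Fin d → ℤ) :=
  {z ∈ Fintype.piFinset fun _ => Icc (-(k : ℤ)) k | sqNorm z ≤ k}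

lemma mem_latticeBall {k : ℕ} {z : Fin d → ℤ} : z ∈ latticeBall d k ↔ sqNorm z ≤ k := by
  refine mem_filter.trans ⟨And.right, fun h => ⟨Fintype.mem_piFinset.2 fun i => ?_, h⟩⟩
  have : (z i).natAbs ^ 2 ≤ k :=
    (single_le_sum (fun j _ => Nat.zero_le ((z j).natAbs ^ 2)) (mem_univ i)).trans h
  rw [mem_Icc, ← abs_le, Int.abs_eq_natAbs]
  exact_mod_cast (Nat.le_self_pow two_ne_zero _).trans this

noncomputable def puncturedLatticeBall (d k : ℕ) : Finset (Fin d → ℤ) := (latticeBall d k).erase 0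

lemma mem_puncturedLatticeBall {k : ℕ} {z : Fin d → ℤ} :
    z ∈ puncturedLatticeBall d k ↔ z ≠ 0 ∧ sqNorm z ≤ k := by
  rw [puncturedLatticeBall, mem_erase, mem_latticeBall]

lemma tsum_ite_eq_sum_puncturedLatticeBall (f : (Fin d → ℤ) → ℝ) (N : ℕ) :
    ∑' z, (if z ≠ 0 ∧ znorm d z ≤ N then f z else 0) =
      ∑ z ∈ puncturedLatticeBall d (N ^ 2), f z := by
  simp_rw [znorm_le_natCast_iff, ← mem_puncturedLatticeBall]
  exact (tsum_eq_sum fun z hz => if_neg hz).trans (sum_congr rfl fun z hz => if_pos hz)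

lemma sum_puncturedLatticeBall_comp {e : (Fin d → ℤ) ≃ (Fin d → ℤ)}
    (he : ∀ z, sqNorm (e z) = sqNorm z) (f : (Fin d → ℤ) → ℝ) (k : ℕ) :
    ∑ z ∈ puncturedLatticeBall d k, f (e z) = ∑ z ∈ puncturedLatticeBall d k, f z := by
  refine sum_equiv e (fun z => ?_) fun _ _ => rfl
  simp only [mem_puncturedLatticeBall, ne_eq, ← sqNorm_eq_zero_iff, he]

lemma sqNorm_mul_znorm_rpow_neg {z : Fin d → ℤ} (hz : z ≠ 0) (r : ℝ) :
    (sqNorm z : ℝ) * znorm d z ^ (-r) = (sqNorm z : ℝ) ^ (1 - r / 2) := by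
  have hpos : (0 : ℝ) < sqNorm z := by
    exact_mod_cast Nat.pos_of_ne_zero (sqNorm_eq_zero_iff.not.2 hz)
  rw [znorm_eq_sqrt_sqNorm, sqrt_eq_rpow, ← rpow_mul hpos.le, sub_eq_add_neg, rpow_add hpos,
    rpow_one]
  ring_nf

section Symmetry

variable [NeZero d]

lemma pker_congr {z w : Fin d → ℤ} (hsq : sqNorm w = sqNorm z) (h0 : w 0 = z 0) (α : ℝ) :
    pker d α w = pker d α z := by
  have hw : w = 0 ↔ z = 0 := by rw [← sqNorm_eq_zero_iff, hsq, sqNorm_eq_zero_iff]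
  simp only [pker, hw, znorm_eq_sqrt_sqNorm, hsq, h0]

lemma sum_mul_pker_eq_zero_of_ne_zero {i j : Fin d} (hi : i ≠ 0) (hij : i ≠ j) (α : ℝ) (k : ℕ) :
    ∑ z ∈ puncturedLatticeBall d k, (z i : ℝ) * z j * pker d α z = 0 := by
  let e : Equiv.Perm (Fin d → ℤ) :=
    Function.Involutive.toPerm (fun z => Function.update z i (-z i)) fun z => by simp
  have he : ∀ z l, l ≠ i → e z l = z l := fun z l hl => Function.update_of_ne hl _ _
  have hei : ∀ z, e z i = -z i := fun z => Function.update_self i _ z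
  have hsq : ∀ z, sqNorm (e z) = sqNorm z := fun z => sqNorm_congr fun l => by
    rcases eq_or_ne l i with rfl | hl
    · rw [hei, Int.natAbs_neg]
    · rw [he z l hl]
  have hflip : ∀ z, ((e z) i : ℝ) * (e z) j * pker d α (e z) = -((z i : ℝ) * z j * pker d α z) := by
    intro z
    rw [pker_congr (hsq z) (he z 0 hi.symm), he z j hij.symm, hei]
    push_cast
    ring
  have := sum_puncturedLatticeBall_comp hsq (fun z => (z i : ℝ) * z j * pker d α z) k
  simp only [hflip, sum_neg_distrib] at this
  linarith

lemma sum_mul_pker_eq_zero {i j : Fin d} (hij : i ≠ j) (α : ℝ) (k : ℕ) :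
    ∑ z ∈ puncturedLatticeBall d k, (z i : ℝ) * z j * pker d α z = 0 := by
  rcases eq_or_ne i 0 with rfl | hi
  · rw [← sum_mul_pker_eq_zero_of_ne_zero hij.symm hij.symm α k]
    exact sum_congr rfl fun z _ => by ring
  · exact sum_mul_pker_eq_zero_of_ne_zero hi hij α k

lemma pker_add_pker_neg {z : Fin d → ℤ} (hz : z ≠ 0) (α : ℝ) :
    pker d α z + pker d α (-z) = 2 * znorm d z ^ (-((d : ℝ) + α)) := by
  have hnorm : znorm d (-z) = znorm d z := by
    rw [znorm_eq_sqrt_sqNorm, znorm_eq_sqrt_sqNorm, sqNorm_neg]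
  simp only [pker, hz, neg_eq_zero, hnorm, Pi.neg_apply, if_false]
  split_ifs <;> first | omega | ring

lemma natCast_mul_sum_sq_mul_pker (i : Fin d) (α : ℝ) (k : ℕ) :
    (d : ℝ) * ∑ z ∈ puncturedLatticeBall d k, (z i : ℝ) * z i * pker d α z =
      ∑ z ∈ puncturedLatticeBall d k, (sqNorm z : ℝ) * znorm d z ^ (-((d : ℝ) + α)) := by
  set u : (Fin d → ℤ) → ℝ := fun z => znorm d z ^ (-((d : ℝ) + α))
  have hu : ∀ {w z}, sqNorm w = sqNorm z → u w = u z := fun h => by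
    simp only [u, znorm_eq_sqrt_sqNorm, h]
  have hsymm : ∑ z ∈ puncturedLatticeBall d k, (z i : ℝ) * z i * pker d α z =
      ∑ z ∈ puncturedLatticeBall d k, (z i : ℝ) ^ 2 * u z := by
    have hneg := sum_puncturedLatticeBall_comp (e := Equiv.neg _) sqNorm_neg
      (fun z => (z i : ℝ) * z i * pker d α z) k
    have hpair : ∀ z ∈ puncturedLatticeBall d k,
        ((-z) i : ℝ) * (-z) i * pker d α (-z) + (z i : ℝ) * z i * pker d α z =
          2 * ((z i : ℝ) ^ 2 * u z) := fun z hz => by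
      have := pker_add_pker_neg (mem_puncturedLatticeBall.1 hz).1 α
      push_cast [Pi.neg_apply]
      linear_combination (z i : ℝ) ^ 2 * this
    have := sum_congr rfl hpair
    rw [sum_add_distrib, ← mul_sum] at this
    simp only [Equiv.neg_apply] at hneg
    linarith
  have hswap : ∀ j, ∑ z ∈ puncturedLatticeBall d k, (z j : ℝ) ^ 2 * u z =
      ∑ z ∈ puncturedLatticeBall d k, (z i : ℝ) ^ 2 * u z := fun j => by
    let e := (Equiv.swap i j).arrowCongr (Equiv.refl ℤ)
    have he : ∀ z, e z = z ∘ Equiv.swap i j := fun z => rfl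
    have hsq : ∀ z, sqNorm (e z) = sqNorm z := fun z => sqNorm_comp_perm z _
    rw [← sum_puncturedLatticeBall_comp hsq (fun z => (z j : ℝ) ^ 2 * u z) k]
    refine sum_congr rfl fun z _ => ?_
    rw [hu (hsq z), he, Function.comp_apply, Equiv.swap_apply_right]
  calc (d : ℝ) * ∑ z ∈ puncturedLatticeBall d k, (z i : ℝ) * z i * pker d α z
      = ∑ j : Fin d, ∑ z ∈ puncturedLatticeBall d k, (z j : ℝ) ^ 2 * u z := by
        simp [hswap, hsymm]
    _ = ∑ z ∈ puncturedLatticeBall d k, (sqNorm z : ℝ) * u z := by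
        rw [sum_comm]
        simp [cast_sqNorm, sum_mul]

end Symmetry

noncomputable def unitBallVolume (d : ℕ) : ℝ := volume.real (ball (0 : EuclideanSpace ℝ (Fin d)) 1)

lemma measureReal_closedBall_eq {r : ℝ} (hr : 0 ≤ r) :
    volume.real (closedBall (0 : EuclideanSpace ℝ (Fin d)) r) = unitBallVolume d * r ^ d := by
  rw [measureReal_def, Measure.addHaar_closedBall _ _ hr, finrank_euclideanSpace_fin,
    ENNReal.toReal_mul, ENNReal.toReal_ofReal (by positivity), mul_comm, unitBallVolume,
    measureReal_def]

noncomputable def toEuclidean (z : Fin d → ℤ) : EuclideanSpace ℝ (Fin d) :=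
  WithLp.toLp 2 fun i => (z i : ℝ)

lemma norm_toEuclidean (z : Fin d → ℤ) : ‖toEuclidean z‖ = √(sqNorm z) := by
  simp [EuclideanSpace.norm_eq, toEuclidean, cast_sqNorm]

def unitCube (z : Fin d → ℤ) : Set (EuclideanSpace ℝ (Fin d)) :=
  {x | ∀ i, (z i : ℝ) ≤ x i ∧ x i < z i + 1}

lemma unitCube_eq_preimage (z : Fin d → ℤ) :
    unitCube z = (MeasurableEquiv.toLp 2 (Fin d → ℝ)).symm ⁻¹'
      Set.univ.pi fun i => Set.Ico (z i : ℝ) (z i + 1) := by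
  ext x
  simp [unitCube, MeasurableEquiv.coe_toLp_symm]

lemma measurableSet_unitCube (z : Fin d → ℤ) : MeasurableSet (unitCube z) := by
  rw [unitCube_eq_preimage]
  exact (MeasurableEquiv.toLp 2 _).symm.measurable (.univ_pi fun _ => measurableSet_Ico)

lemma volume_unitCube (z : Fin d → ℤ) : volume (unitCube z) = 1 := by
  rw [unitCube_eq_preimage,
    (EuclideanSpace.volume_preserving_symm_measurableEquiv_toLp _).measure_preimage
      (MeasurableSet.univ_pi fun _ => measurableSet_Ico).nullMeasurableSet, volume_pi_pi]
  simp

lemma mem_unitCube_floor (x : EuclideanSpace ℝ (Fin d)) : x ∈ unitCube fun i => ⌊x i⌋ :=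
  fun _ => ⟨Int.floor_le _, Int.lt_floor_add_one _⟩

lemma eq_floor_of_mem_unitCube {z : Fin d → ℤ} {x : EuclideanSpace ℝ (Fin d)}
    (hx : x ∈ unitCube z) : z = fun i => ⌊x i⌋ :=
  funext fun i => (Int.floor_eq_iff.2 (hx i)).symm

lemma volume_biUnion_unitCube (s : Finset (Fin d → ℤ)) :
    volume (⋃ z ∈ s, unitCube z) = #s := by
  rw [measure_biUnion_finset (fun z _ w _ hzw => Set.disjoint_left.2 fun x hz hw =>
    hzw ((eq_floor_of_mem_unitCube hz).trans (eq_floor_of_mem_unitCube hw).symm))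
    fun z _ => measurableSet_unitCube z]
  simp [volume_unitCube]

lemma norm_sub_toEuclidean_le {z : Fin d → ℤ} {x : EuclideanSpace ℝ (Fin d)}
    (hx : x ∈ unitCube z) : ‖x - toEuclidean z‖ ≤ √d := by
  rw [EuclideanSpace.norm_eq]
  refine Real.sqrt_le_sqrt ((sum_le_sum fun i _ => ?_).trans_eq
    (b := ∑ _i : Fin d, (1 : ℝ)) (by simp))
  have := hx i
  simp only [toEuclidean, PiLp.sub_apply, Real.norm_eq_abs, sq_abs]
  nlinarith

lemma biUnion_unitCube_subset_closedBall (k : ℕ) :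
    (⋃ z ∈ latticeBall d k, unitCube z) ⊆ closedBall 0 (√k + √d) := by
  refine Set.iUnion₂_subset fun z hz x hx => mem_closedBall_zero_iff.2 ?_
  have hz : ‖toEuclidean z‖ ≤ √k := by
    rw [norm_toEuclidean]
    exact Real.sqrt_le_sqrt (by exact_mod_cast mem_latticeBall.1 hz)
  linarith [norm_le_norm_add_norm_sub' x (toEuclidean z), norm_sub_toEuclidean_le hx]

lemma closedBall_subset_biUnion_unitCube (k : ℕ) :
    closedBall 0 (√k - √d) ⊆ ⋃ z ∈ latticeBall d k, unitCube z := by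
  intro x hx
  have hcube := mem_unitCube_floor x
  refine Set.mem_iUnion₂.2 ⟨_, mem_latticeBall.2 ?_, hcube⟩
  have : √(sqNorm fun i => ⌊x i⌋) ≤ √k := by
    rw [← norm_toEuclidean]
    linarith [norm_le_insert x (toEuclidean fun i => ⌊x i⌋), norm_sub_toEuclidean_le hcube,
      mem_closedBall_zero_iff.1 hx]
  exact_mod_cast (Real.sqrt_le_sqrt_iff (Nat.cast_nonneg _)).1 this

lemma card_latticeBall_le (k : ℕ) :
    (#(latticeBall d k) : ℝ) ≤ unitBallVolume d * (√k + √d) ^ d := by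
  have := ENNReal.toReal_mono measure_closedBall_lt_top.ne
    (measure_mono (μ := volume) (biUnion_unitCube_subset_closedBall (d := d) k))
  rwa [volume_biUnion_unitCube, ENNReal.toReal_natCast, ← measureReal_def,
    measureReal_closedBall_eq (by positivity)] at this

lemma le_card_latticeBall {k : ℕ} (h : √d ≤ √k) :
    unitBallVolume d * (√k - √d) ^ d ≤ #(latticeBall d k) := by
  have := ENNReal.toReal_mono (by simp [volume_biUnion_unitCube])
    (measure_mono (μ := volume) (closedBall_subset_biUnion_unitCube (d := d) k))
  rwa [volume_biUnion_unitCube, ENNReal.toReal_natCast, ← measureReal_def,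
    measureReal_closedBall_eq (sub_nonneg.2 h)] at this

lemma tendsto_card_latticeBall_div :
    Tendsto (fun k : ℕ => (#(latticeBall d k) : ℝ) / √k ^ d) atTop (𝓝 (unitBallVolume d)) := by
  have hsqrt : Tendsto (fun k : ℕ => √(k : ℝ)) atTop atTop :=
    Real.tendsto_sqrt_atTop.comp tendsto_natCast_atTop_atTop
  have hsmall : Tendsto (fun k : ℕ => √d / √k) atTop (𝓝 0) := tendsto_const_nhds.div_atTop hsqrt
  have hlim : ∀ c : ℝ, Tendsto (fun k : ℕ => unitBallVolume d * (1 + c * (√d / √k)) ^ d) atTop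
      (𝓝 (unitBallVolume d)) := fun c => by
    simpa using ((hsmall.const_mul c).const_add 1).pow d |>.const_mul (unitBallVolume d)
  have hscale : ∀ c : ℝ, ∀ᶠ k : ℕ in atTop,
      unitBallVolume d * (1 + c * (√d / √k)) ^ d =
        unitBallVolume d * (√k + c * √d) ^ d / √k ^ d := by
    intro c
    filter_upwards [hsqrt.eventually_gt_atTop 0] with k hk
    rw [mul_div_assoc, ← div_pow, add_div, div_self hk.ne', mul_div_assoc]
  refine tendsto_of_tendsto_of_tendsto_of_le_of_le' (hlim (-1)) (hlim 1) ?_ ?_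
  · filter_upwards [hscale (-1), hsqrt.eventually_ge_atTop √d] with k hk hdk
    rw [hk, neg_one_mul, ← sub_eq_add_neg]
    exact div_le_div_of_nonneg_right (le_card_latticeBall hdk) (by positivity)
  · filter_upwards [hscale 1] with k hk
    rw [hk, one_mul]
    exact div_le_div_of_nonneg_right (card_latticeBall_le k) (by positivity)

lemma tendsto_card_puncturedLatticeBall_div [NeZero d] :
    Tendsto (fun k : ℕ => (#(puncturedLatticeBall d k) : ℝ) / (k : ℝ) ^ ((d : ℝ) / 2)) atTop
      (𝓝 (unitBallVolume d)) := by
  have hpow : Tendsto (fun k : ℕ => √(k : ℝ) ^ d) atTop atTop :=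
    (tendsto_pow_atTop (NeZero.ne d)).comp
      (Real.tendsto_sqrt_atTop.comp tendsto_natCast_atTop_atTop)
  have hcard : ∀ k, (#(puncturedLatticeBall d k) : ℝ) = #(latticeBall d k) - 1 := fun k => by
    rw [eq_sub_iff_add_eq]
    exact_mod_cast card_erase_add_one (mem_latticeBall.2 (by simp [sqNorm]))
  simpa [hcard, sub_div, Real.rpow_div_two_eq_sqrt _ (Nat.cast_nonneg _)] using
    (tendsto_card_latticeBall_div (d := d)).sub ((tendsto_const_nhds (x := (1 : ℝ))).div_atTop hpow)

lemma filter_sqNorm_le_puncturedLatticeBall {k M : ℕ} (h : k ≤ M) :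
    {z ∈ puncturedLatticeBall d M | sqNorm z ≤ k} = puncturedLatticeBall d k := by
  ext z
  simp only [mem_filter, mem_puncturedLatticeBall]
  exact ⟨fun hz => ⟨hz.1.1, hz.2⟩, fun hz => ⟨⟨hz.1, hz.2.trans h⟩, hz.2⟩⟩

lemma tendsto_sum_sqNorm_rpow_div_log [NeZero d] :
    Tendsto (fun M : ℕ => (∑ z ∈ puncturedLatticeBall d M, (sqNorm z : ℝ) ^ (-((d : ℝ) / 2))) /
      log M) atTop (𝓝 (unitBallVolume d * (d / 2))) := by
  set β : ℝ := d / 2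
  have habel : ∀ M, ∑ z ∈ puncturedLatticeBall d M, (sqNorm z : ℝ) ^ (-β) =
      ∑ k ∈ range M, (#(puncturedLatticeBall d k) : ℝ) * ((k : ℝ) ^ (-β) - ((k : ℝ) + 1) ^ (-β)) +
        #(puncturedLatticeBall d M) * (M : ℝ) ^ (-β) := fun M => by
    rw [sum_comp_eq_sum_range_card_filter_le_mul_sub _ sqNorm (fun k => (k : ℝ) ^ (-β))
      fun z hz => (mem_puncturedLatticeBall.1 hz).2]
    congr 1
    refine sum_congr rfl fun k hk => ?_
    rw [filter_sqNorm_le_puncturedLatticeBall (mem_range.1 hk).le]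
    push_cast
    rfl
  have hinterior := tendsto_sum_range_div_log (tendsto_card_puncturedLatticeBall_div.mul
    (tendsto_rpow_mul_sub_rpow_div_log_sub β) |>.congr' <| by
      filter_upwards [eventually_ge_atTop 1] with k hk
      have hβ : (k : ℝ) ^ β ≠ 0 := (rpow_pos_of_pos (by exact_mod_cast hk) β).ne'
      have key : ∀ a b c x : ℝ, x ≠ 0 → a / x * (x * b / c) = a * b / c := fun a b c x hx => by
        field_simp
      exact key _ _ _ _ hβ)
  have hboundary : Tendsto (fun M : ℕ => #(puncturedLatticeBall d M) * (M : ℝ) ^ (-β) / log M)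
      atTop (𝓝 0) := by
    simpa [β, rpow_neg, div_eq_mul_inv] using
      tendsto_card_puncturedLatticeBall_div.div_atTop
        (tendsto_log_atTop.comp tendsto_natCast_atTop_atTop)
  simpa [habel, add_div] using hinterior.add hboundary

end LatticeKernel

open LatticeKernel in
theorem statement1_general (d : ℕ) [NeZero d] (i j : Fin d) :
    ∃ D : ℝ,
      Filter.Tendsto
        (fun N : ℕ => (Real.log N)⁻¹ *
          ∑' z : Fin d → ℤ,
            (if z ≠ 0 ∧ znorm d z ≤ (N : ℝ) then (z i : ℝ) * (z j : ℝ) * pker d 2 z else 0))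
        Filter.atTop (nhds D) ∧ (i ≠ j → D = 0) := by
  simp only [tsum_ite_eq_sum_puncturedLatticeBall]
  rcases eq_or_ne i j with rfl | hij
  · refine ⟨unitBallVolume d, ?_, fun h => (h rfl).elim⟩
    have hd : (d : ℝ) ≠ 0 := NeZero.ne _
    have hlim := (tendsto_sum_sqNorm_rpow_div_log (d := d)).comp
      (tendsto_pow_atTop two_ne_zero) |>.const_mul (2 / (d : ℝ))
    rw [show 2 / (d : ℝ) * (unitBallVolume d * (d / 2)) = unitBallVolume d by field_simp] at hlim
    refine hlim.congr fun N => ?_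
    have hdiag := natCast_mul_sum_sq_mul_pker i 2 (N ^ 2)
    rw [sum_congr rfl fun z hz => sqNorm_mul_znorm_rpow_neg (mem_puncturedLatticeBall.1 hz).1 _,
      show 1 - ((d : ℝ) + 2) / 2 = -((d : ℝ) / 2) by ring] at hdiag
    simp only [Function.comp_apply, Nat.cast_pow, log_pow, Nat.cast_ofNat, ← hdiag]
    field_simp
  · exact ⟨0, by simp [sum_mul_pker_eq_zero hij], fun _ => rfl⟩

/-- for `α = 2`, the limit
`D_{i,j} = lim_{N→∞} (1/log N) Σ_{0<‖z‖≤N} z_i z_j p(z)` exists in `ℝ`,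
and `D_{i,j} = 0` when `i ≠ j`. -/
theorem statement1 (d : ℕ) [NeZero d] (hd : 1 ≤ d) (i j : Fin d) :
    ∃ D : ℝ,
      Filter.Tendsto
        (fun N : ℕ => (Real.log N)⁻¹ *
          ∑' z : Fin d → ℤ,
            (if z ≠ 0 ∧ znorm d z ≤ (N : ℝ) then (z i : ℝ) * (z j : ℝ) * pker d 2 z else 0))
        Filter.atTop (nhds D) ∧ (i ≠ j → D = 0) :=
  statement1_general d i j
end

section
/- Let d ≥ 1, a ∈ ℝ^d and β ∈ ℝ. Then the complex-valued function u ↦ ‖u‖^{-(d+1)} (e^{iβ(u·a)} − 1 − iβ(u·a)·1_{‖u‖≤1}) is Lebesgue integrable over the half-space {u ∈ ℝ^d : u₁ > 0}. -/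
/-!
The integrand is in fact integrable over all of `ℝ^d`. On the unit ball the bracket is the
second-order Taylor remainder of `x ↦ e^{ix}`, hence `O(‖u‖²)`, so the integrand is
`O(‖u‖^{1-d})`, which is integrable near the origin. Off the unit ball the bracket is bounded
by `2`, and `‖u‖^{-(d+1)}` is integrable at infinity. In polar coordinates both estimates
reduce to integrability of `r ↦ r^{d-1-γ}` on `(0, 1)` for `γ < d` and on `(1, ∞)` for `γ > d`;
the same argument covers the exponent `-s` for every `s ∈ (d, d + 2)`.
-/

open MeasureTheory Set Metric Module Complex

section

variable {E F : Type*} [NormedAddCommGroup E] [NormedSpace ℝ E] [FiniteDimensional ℝ E]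
  [Nontrivial E] [MeasurableSpace E] [BorelSpace E] [NormedAddCommGroup F]
  {μ : Measure E} [μ.IsAddHaarMeasure]

lemma integrableOn_compl_ball_of_norm_le_rpow {f : E → F} {C α r : ℝ} (hr : 0 < r)
    (hα : finrank ℝ E < α)
    (h_decay : ∀ᵐ x ∂μ.restrict (ball 0 r)ᶜ, ‖f x‖ ≤ C * ‖x‖ ^ (-α))
    (h_meas : AEStronglyMeasurable f μ) :
    IntegrableOn f (ball 0 r)ᶜ μ := by
  have h_rpow : IntegrableOn (fun y : ℝ ↦ C * y ^ ((finrank ℝ E : ℝ) - 1 - α)) (Ici r) :=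
    (integrableOn_Ici_iff_integrableOn_Ioi enorm_ne_top).2
      ((integrableOn_Ioi_rpow_of_lt (by linarith) hr).const_mul C)
  have h_radial : IntegrableOn
      (fun y : ℝ ↦ y ^ (finrank ℝ E - 1) • (Ici r).indicator (fun y ↦ C * y ^ (-α)) y) (Ioi 0) := by
    refine ((h_rpow.integrable_indicator measurableSet_Ici).integrableOn).congr_fun
      (fun y (hy : 0 < y) ↦ ?_) measurableSet_Ioi
    by_cases hyr : y ∈ Ici r
    · have h_dim : 1 ≤ finrank ℝ E := finrank_pos
      simp only [indicator_of_mem hyr, smul_eq_mul]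
      rw [mul_left_comm, ← Real.rpow_natCast, ← Real.rpow_add hy]
      push_cast [h_dim]
      ring_nf
    · simp [indicator_of_notMem hyr]
  rw [← integrable_fun_norm_addHaar μ] at h_radial
  refine h_radial.integrableOn.mono' h_meas.restrict ?_
  filter_upwards [h_decay, ae_restrict_mem measurableSet_ball.compl] with x hx hxr
  rwa [indicator_of_mem (by simpa using hxr)]

end

lemma norm_exp_I_mul_sub_one_le_two (x : ℝ) : ‖exp (I * x) - 1‖ ≤ 2 := by
  calc ‖exp (I * x) - 1‖ ≤ ‖exp (I * x)‖ + ‖(1 : ℂ)‖ := norm_sub_le _ _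
    _ = 2 := by rw [norm_exp_I_mul_ofReal, norm_one]; norm_num

lemma norm_exp_I_mul_sub_one_sub_le (x : ℝ) : ‖exp (I * x) - 1 - I * x‖ ≤ 2 * x ^ 2 := by
  have h_norm : ‖I * (x : ℂ)‖ = |x| := by simp
  rcases le_or_gt |x| 1 with hx | hx
  · calc ‖exp (I * x) - 1 - I * x‖ ≤ ‖I * (x : ℂ)‖ ^ 2 :=
          norm_exp_sub_one_sub_id_le (h_norm ▸ hx)
      _ ≤ 2 * x ^ 2 := by rw [h_norm, sq_abs]; nlinarith [sq_nonneg x]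
  · calc ‖exp (I * x) - 1 - I * x‖ ≤ ‖exp (I * x) - 1‖ + ‖I * (x : ℂ)‖ := norm_sub_le _ _
      _ ≤ |x| + |x| := by rw [h_norm]; gcongr; exact Real.norm_exp_I_mul_ofReal_sub_one_le
      _ ≤ 2 * x ^ 2 := by nlinarith [sq_abs x]

section LevyIntegrand

variable {E : Type*} [NormedAddCommGroup E] [InnerProductSpace ℝ E]

noncomputable def levyIntegrand (s β : ℝ) (a u : E) : ℂ :=
  ((‖u‖ ^ (-s) : ℝ) : ℂ) *
    (exp (I * (β : ℂ) * ((inner ℝ u a : ℝ) : ℂ)) - 1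
      - I * (β : ℂ) * ((inner ℝ u a : ℝ) : ℂ) * (if ‖u‖ ≤ 1 then 1 else 0))

variable {s β : ℝ} {a u : E}

lemma levyIntegrand_eq_of_norm_le_one (hu : ‖u‖ ≤ 1) :
    levyIntegrand s β a u =
      ((‖u‖ ^ (-s) : ℝ) : ℂ) * (exp (I * ↑(β * inner ℝ u a)) - 1 - I * ↑(β * inner ℝ u a)) := by
  simp only [levyIntegrand, if_pos hu, mul_one]
  push_cast
  ring_nf

lemma levyIntegrand_eq_of_one_lt_norm (hu : 1 < ‖u‖) :
    levyIntegrand s β a u = ((‖u‖ ^ (-s) : ℝ) : ℂ) * (exp (I * ↑(β * inner ℝ u a)) - 1) := by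
  simp only [levyIntegrand, if_neg hu.not_ge, mul_zero, sub_zero]
  push_cast
  ring_nf

lemma norm_levyIntegrand_le_of_norm_le_one (hu : ‖u‖ ≤ 1) :
    ‖levyIntegrand s β a u‖ ≤ 2 * (β * ‖a‖) ^ 2 * ‖u‖ ^ (-(s - 2)) := by
  rcases eq_or_ne u 0 with rfl | hu₀
  · simp only [levyIntegrand, inner_zero_left, ofReal_zero, mul_zero, exp_zero, sub_self,
      zero_mul, norm_zero]
    positivity
  have hpos : 0 < ‖u‖ := norm_pos_iff.2 hu₀
  have h_inner : (β * inner ℝ u a) ^ 2 ≤ (β * ‖a‖) ^ 2 * ‖u‖ ^ 2 := by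
    calc (β * inner ℝ u a) ^ 2 = β ^ 2 * |inner ℝ u a| ^ 2 := by rw [mul_pow, sq_abs]
      _ ≤ β ^ 2 * (‖u‖ * ‖a‖) ^ 2 := by gcongr; exact abs_real_inner_le_norm u a
      _ = (β * ‖a‖) ^ 2 * ‖u‖ ^ 2 := by ring
  rw [levyIntegrand_eq_of_norm_le_one hu, norm_mul, Complex.norm_real,
    Real.norm_of_nonneg (by positivity)]
  calc ‖u‖ ^ (-s) * ‖exp (I * ↑(β * inner ℝ u a)) - 1 - I * ↑(β * inner ℝ u a)‖
      ≤ ‖u‖ ^ (-s) * (2 * ((β * ‖a‖) ^ 2 * ‖u‖ ^ 2)) := by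
        gcongr
        exact (norm_exp_I_mul_sub_one_sub_le _).trans (by gcongr)
    _ = 2 * (β * ‖a‖) ^ 2 * ‖u‖ ^ (-(s - 2)) := by
        rw [show -(s - 2) = -s + 2 by ring, Real.rpow_add hpos, Real.rpow_two]
        ring

lemma norm_levyIntegrand_le_of_one_lt_norm (hu : 1 < ‖u‖) :
    ‖levyIntegrand s β a u‖ ≤ 2 * ‖u‖ ^ (-s) := by
  rw [levyIntegrand_eq_of_one_lt_norm hu, norm_mul, Complex.norm_real,
    Real.norm_of_nonneg (by positivity), mul_comm]
  gcongr
  exact norm_exp_I_mul_sub_one_le_two _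

variable [MeasurableSpace E] [BorelSpace E]

lemma measurable_levyIntegrand : Measurable (levyIntegrand s β a) := by
  unfold levyIntegrand
  have h_ind : Measurable fun u : E ↦ if ‖u‖ ≤ 1 then (1 : ℂ) else 0 :=
    Measurable.ite (measurableSet_le measurable_norm measurable_const) measurable_const
      measurable_const
  fun_prop

theorem integrable_levyIntegrand [FiniteDimensional ℝ E] [Nontrivial E] (μ : Measure E)
    [μ.IsAddHaarMeasure] (hs_gt : (finrank ℝ E : ℝ) < s) (hs_lt : s < finrank ℝ E + 2) :
    Integrable (levyIntegrand s β a) μ := by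
  have h_meas : AEStronglyMeasurable (levyIntegrand s β a) μ :=
    measurable_levyIntegrand.aestronglyMeasurable
  have h_ball : IntegrableOn (levyIntegrand s β a) (ball 0 1) μ := by
    refine integrableOn_ball_of_norm_le_rpow (C := 2 * (β * ‖a‖) ^ 2) (α := s - 2) finrank_pos
      (by linarith) ?_ h_meas
    filter_upwards [ae_restrict_mem measurableSet_ball] with u hu
    exact norm_levyIntegrand_le_of_norm_le_one (mem_ball_zero_iff.1 hu).le
  have h_compl : IntegrableOn (levyIntegrand s β a) (ball 0 1)ᶜ μ := by
    refine integrableOn_compl_ball_of_norm_le_rpow (C := 2) one_pos hs_gt ?_ h_meas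
    have h_sphere : ∀ᵐ u ∂μ, u ∉ sphere (0 : E) 1 :=
      measure_eq_zero_iff_ae_notMem.1 (Measure.addHaar_sphere μ 0 1)
    filter_upwards [ae_restrict_mem measurableSet_ball.compl, ae_restrict_of_ae h_sphere]
      with u hu hu_sphere
    simp only [mem_compl_iff, mem_ball_zero_iff, not_lt, mem_sphere_zero_iff_norm] at hu hu_sphere
    exact norm_levyIntegrand_le_of_one_lt_norm (lt_of_le_of_ne hu (Ne.symm hu_sphere))
  rw [← integrableOn_univ, ← union_compl_self (ball (0 : E) 1)]
  exact h_ball.union h_compl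

end LevyIntegrand

theorem statement3_general (d : ℕ) [NeZero d]
    (a : EuclideanSpace ℝ (Fin d)) (β : ℝ) :
    MeasureTheory.IntegrableOn
      (fun u : EuclideanSpace ℝ (Fin d) =>
        ((‖u‖ ^ (-((d : ℝ) + 1)) : ℝ) : ℂ) *
          (Complex.exp (Complex.I * (β : ℂ) * ((inner ℝ u a : ℝ) : ℂ)) - 1
            - Complex.I * (β : ℂ) * ((inner ℝ u a : ℝ) : ℂ) * (if ‖u‖ ≤ 1 then 1 else 0)))
      {u : EuclideanSpace ℝ (Fin d) | 0 < u 0} := by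
  have h_dim : finrank ℝ (EuclideanSpace ℝ (Fin d)) = d := finrank_euclideanSpace_fin
  exact (integrable_levyIntegrand (s := (d : ℝ) + 1) volume (by simp [h_dim])
    (by simp [h_dim])).integrableOn

/-- for `α = 1`,
`u ↦ ‖u‖^{-(d+1)} (e^{iβ(u·a)} − 1 − iβ(u·a)·1_{‖u‖≤1})` is Lebesgue integrable over
the half-space `{u ∈ ℝ^d : u₁ > 0}`. -/
theorem statement3 (d : ℕ) [NeZero d] (hd : 1 ≤ d)
    (a : EuclideanSpace ℝ (Fin d)) (β : ℝ) :
    MeasureTheory.IntegrableOn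
      (fun u : EuclideanSpace ℝ (Fin d) =>
        ((‖u‖ ^ (-((d : ℝ) + 1)) : ℝ) : ℂ) *
          (Complex.exp (Complex.I * (β : ℂ) * ((inner ℝ u a : ℝ) : ℂ)) - 1
            - Complex.I * (β : ℂ) * ((inner ℝ u a : ℝ) : ℂ) * (if ‖u‖ ≤ 1 then 1 else 0)))
      {u : EuclideanSpace ℝ (Fin d) | 0 < u 0} :=
  statement3_general d a β
end

section
/- Let d ≥ 1 and α > 1. Then m := Σ_{z∈ℤ^d, z≠0} z p(z) converges absolutely in ℝ^d, and for every a ∈ ℝ^d and β ∈ ℝ, lim_{N→∞} N · Σ_{z∈ℤ^d, z≠0} p(z) (e^{iβ(z·a)/N} − 1) = iβ (m·a), where the limit is in ℂ. -/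
open Filter Topology

lemma znorm_eq_norm_toLp (d : ℕ) (z : Fin d → ℤ) :
    znorm d z = ‖(WithLp.toLp 2 fun i => (z i : ℝ) : EuclideanSpace ℝ (Fin d))‖ := by
  simp [EuclideanSpace.norm_eq, znorm]

lemma znorm_nonneg (d : ℕ) (z : Fin d → ℤ) : 0 ≤ znorm d z := Real.sqrt_nonneg _

lemma abs_le_znorm (d : ℕ) (z : Fin d → ℤ) (i : Fin d) : |(z i : ℝ)| ≤ znorm d z := by
  simpa [znorm_eq_norm_toLp] using
    PiLp.norm_apply_le (WithLp.toLp 2 fun i => (z i : ℝ) : EuclideanSpace ℝ (Fin d)) i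

lemma abs_sum_mul_le_znorm_mul (d : ℕ) (z : Fin d → ℤ) (a : Fin d → ℝ) :
    |∑ i, (z i : ℝ) * a i| ≤ znorm d z * ∑ i, |a i| := by
  calc |∑ i, (z i : ℝ) * a i| ≤ ∑ i, znorm d z * |a i| := by
        refine (Finset.abs_sum_le_sum_abs _ _).trans (Finset.sum_le_sum fun i _ => ?_)
        rw [abs_mul]
        exact mul_le_mul_of_nonneg_right (abs_le_znorm d z i) (abs_nonneg _)
    _ = znorm d z * ∑ i, |a i| := by rw [Finset.mul_sum]

lemma summable_znorm_rpow {d : ℕ} {r : ℝ} (hr : r < -d) :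
    Summable fun z : Fin d → ℤ => znorm d z ^ r := by
  set b := PiLp.basisFun 2 ℝ (Fin d)
  have hrank : Module.finrank ℤ (Submodule.span ℤ (Set.range b)) = d := by
    rw [Module.finrank_eq_card_basis (b.restrictScalars ℤ), Fintype.card_fin]
  have := ZLattice.summable_norm_rpow (Submodule.span ℤ (Set.range b)) r (by rwa [hrank])
  rw [← (b.restrictScalars ℤ).equivFun.symm.toEquiv.summable_iff] at this
  refine this.congr fun z => ?_
  have hcoe : ((b.restrictScalars ℤ).equivFun.symm z : EuclideanSpace ℝ (Fin d)) =
      WithLp.toLp 2 fun i => (z i : ℝ) := by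
    ext i
    simp [b, Module.Basis.equivFun_symm_apply, Finset.sum_apply, Pi.single_apply]
  rw [Function.comp_apply, znorm_eq_norm_toLp, LinearEquiv.coe_toEquiv, ← hcoe,
    Submodule.coe_norm]

section pker

variable {d : ℕ} [NeZero d] {α : ℝ}

lemma pker_nonneg (z : Fin d → ℤ) : 0 ≤ pker d α z := by
  have hpow := Real.rpow_nonneg (znorm_nonneg d z) (-((d : ℝ) + α))
  unfold pker
  split_ifs <;> linarith

lemma pker_le (z : Fin d → ℤ) : pker d α z ≤ 3 * znorm d z ^ (-((d : ℝ) + α)) := by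
  have hpow := Real.rpow_nonneg (znorm_nonneg d z) (-((d : ℝ) + α))
  unfold pker
  split_ifs <;> linarith

lemma summable_znorm_mul_pker (hα : 1 < α) :
    Summable fun z : Fin d → ℤ => znorm d z * pker d α z := by
  refine .of_nonneg_of_le (fun z => mul_nonneg (znorm_nonneg d z) (pker_nonneg z)) (fun z => ?_)
    ((summable_znorm_rpow (r := 1 + -((d : ℝ) + α)) (by linarith)).mul_left 3)
  rw [Real.rpow_one_add' (znorm_nonneg d z) (by linarith), mul_left_comm]
  exact mul_le_mul_of_nonneg_left (pker_le z) (znorm_nonneg d z)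

lemma summable_coord_mul_pker (hα : 1 < α) (i : Fin d) :
    Summable fun z : Fin d → ℤ => (z i : ℝ) * pker d α z := by
  refine (summable_znorm_mul_pker hα).of_norm_bounded fun z => ?_
  rw [Real.norm_eq_abs, abs_mul, abs_of_nonneg (pker_nonneg z)]
  exact mul_le_mul_of_nonneg_right (abs_le_znorm d z i) (pker_nonneg z)

lemma summable_pker_mul_abs_sum_coord_mul (hα : 1 < α) (a : Fin d → ℝ) :
    Summable fun z : Fin d → ℤ => pker d α z * |∑ i, (z i : ℝ) * a i| := by
  refine .of_nonneg_of_le (fun z => mul_nonneg (pker_nonneg z) (abs_nonneg _)) (fun z => ?_)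
    ((summable_znorm_mul_pker hα).mul_left (∑ i, |a i|))
  calc pker d α z * |∑ i, (z i : ℝ) * a i| ≤ pker d α z * (znorm d z * ∑ i, |a i|) :=
        mul_le_mul_of_nonneg_left (abs_sum_mul_le_znorm_mul d z a) (pker_nonneg z)
    _ = (∑ i, |a i|) * (znorm d z * pker d α z) := by ring

lemma tsum_pker_mul_sum_coord_mul (hα : 1 < α) (a : Fin d → ℝ) :
    ∑' z : Fin d → ℤ, pker d α z * ∑ i, (z i : ℝ) * a i =
      ∑ i, (∑' z : Fin d → ℤ, (z i : ℝ) * pker d α z) * a i := by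
  calc ∑' z : Fin d → ℤ, pker d α z * ∑ i, (z i : ℝ) * a i
      = ∑' z : Fin d → ℤ, ∑ i, (z i : ℝ) * pker d α z * a i :=
        tsum_congr fun z => by rw [Finset.mul_sum]; exact Finset.sum_congr rfl fun i _ => by ring
    _ = ∑ i, ∑' z : Fin d → ℤ, (z i : ℝ) * pker d α z * a i :=
        Summable.tsum_finsetSum fun i _ => (summable_coord_mul_pker hα i).mul_right (a i)
    _ = ∑ i, (∑' z : Fin d → ℤ, (z i : ℝ) * pker d α z) * a i := by simp_rw [tsum_mul_right]

end pker

lemma tendsto_nat_mul_exp_div_sub_one (w : ℂ) :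
    Tendsto (fun N : ℕ => (N : ℂ) * (Complex.exp (w / N) - 1)) atTop (𝓝 w) := by
  have hderiv : HasDerivAt (fun t : ℝ => Complex.exp (t * w)) w 0 := by
    simpa using ((hasDerivAt_id (0 : ℝ)).ofReal_comp.mul_const w).cexp
  have hinv : Tendsto (fun N : ℕ => (N : ℝ)⁻¹) atTop (𝓝[>] 0) :=
    tendsto_inv_atTop_nhdsGT_zero.comp tendsto_natCast_atTop_atTop
  refine (hderiv.tendsto_slope_zero_right.comp hinv).congr fun N => ?_
  simp [div_eq_mul_inv, mul_comm]

lemma nat_mul_norm_exp_I_mul_div_sub_one_le (N : ℕ) (x : ℝ) :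
    N * ‖Complex.exp (Complex.I * x / N) - 1‖ ≤ |x| := by
  rcases N.eq_zero_or_pos with rfl | hN
  · simp
  have hx : Complex.I * x / N = Complex.I * ((x / N : ℝ) : ℂ) := by push_cast; ring
  calc N * ‖Complex.exp (Complex.I * x / N) - 1‖ ≤ N * ‖x / N‖ := by
        rw [hx]; gcongr; exact Real.norm_exp_I_mul_ofReal_sub_one_le
    _ = |x| := by
        rw [Real.norm_eq_abs, abs_div, Nat.abs_cast]; field_simp

lemma tendsto_nat_mul_tsum_mul_exp_I_mul_div_sub_one {ι : Type*} (p : ι → ℂ) (φ : ι → ℝ)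
    (h : Summable fun i => ‖p i‖ * |φ i|) :
    Tendsto (fun N : ℕ => (N : ℂ) * ∑' i, p i * (Complex.exp (Complex.I * φ i / N) - 1))
      atTop (𝓝 (∑' i, p i * (Complex.I * φ i))) := by
  simp_rw [← tsum_mul_left]
  refine tendsto_tsum_of_dominated_convergence h (fun i => ?_) (.of_forall fun N i => ?_)
  · simpa only [mul_left_comm] using
      (tendsto_nat_mul_exp_div_sub_one (Complex.I * φ i)).const_mul (p i)
  · rw [norm_mul, norm_mul, mul_left_comm, Complex.norm_natCast]
    exact mul_le_mul_of_nonneg_left (nat_mul_norm_exp_I_mul_div_sub_one_le N (φ i)) (norm_nonneg _)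

theorem statement9_general (d : ℕ) [NeZero d] (α : ℝ) (hα : 1 < α)
    (a : Fin d → ℝ) (β : ℝ) :
    Summable (fun z : Fin d → ℤ => znorm d z * pker d α z) ∧
    Filter.Tendsto
      (fun N : ℕ => ((N : ℝ) : ℂ) *
        ∑' z : Fin d → ℤ, (pker d α z : ℂ) *
          (Complex.exp (Complex.I * (β : ℂ) * ((∑ i, (z i : ℝ) * a i : ℝ) : ℂ) / (N : ℂ)) - 1))
      Filter.atTop
      (nhds (Complex.I * (β : ℂ) *
        ((∑ i, (∑' z : Fin d → ℤ, (z i : ℝ) * pker d α z) * a i : ℝ) : ℂ))) := by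
  refine ⟨summable_znorm_mul_pker hα, ?_⟩
  have hdom : Summable fun z : Fin d → ℤ =>
      ‖(pker d α z : ℂ)‖ * |β * ∑ i, (z i : ℝ) * a i| := by
    simpa only [Complex.norm_real, Real.norm_eq_abs, abs_of_nonneg (pker_nonneg _), abs_mul,
      mul_left_comm] using (summable_pker_mul_abs_sum_coord_mul hα a).mul_left |β|
  convert tendsto_nat_mul_tsum_mul_exp_I_mul_div_sub_one _ _ hdom using 3 with N
  · norm_cast
  · exact tsum_congr fun z => by push_cast; ring_nf
  · have hterm (z : Fin d → ℤ) :
        (pker d α z : ℂ) * (Complex.I * ((β * ∑ i, (z i : ℝ) * a i : ℝ) : ℂ)) =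
          Complex.I * β * ((pker d α z * ∑ i, (z i : ℝ) * a i : ℝ) : ℂ) := by
      push_cast; ring
    rw [tsum_congr hterm, tsum_mul_left, ← Complex.ofReal_tsum, tsum_pker_mul_sum_coord_mul hα a]

/-- for `α > 1`, `m = Σ_{z≠0} z p(z)` converges absolutely, and
`lim_{N→∞} N Σ_{z≠0} p(z)(e^{iβ(z·a)/N} − 1) = iβ (m·a)`. -/
theorem statement9 (d : ℕ) [NeZero d] (hd : 1 ≤ d) (α : ℝ) (hα : 1 < α)
    (a : Fin d → ℝ) (β : ℝ) :
    Summable (fun z : Fin d → ℤ => znorm d z * pker d α z) ∧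
    Filter.Tendsto
      (fun N : ℕ => ((N : ℝ) : ℂ) *
        ∑' z : Fin d → ℤ, (pker d α z : ℂ) *
          (Complex.exp (Complex.I * (β : ℂ) * ((∑ i, (z i : ℝ) * a i : ℝ) : ℂ) / (N : ℂ)) - 1))
      Filter.atTop
      (nhds (Complex.I * (β : ℂ) *
        ((∑ i, (∑' z : Fin d → ℤ, (z i : ℝ) * pker d α z) * a i : ℝ) : ℂ))) :=
  statement9_general d α hα a β
end

section
/- Let d = 1 and 0 < α ≤ 1, and let φ(θ) = Σ_{x∈ℤ, x≠0} cos(θx) s(x) be the characteristic function of the step distribution s on ℤ. Then lim_{θ→0} (1 − φ(θ)) / |θ|^α = (1/s*) ∫_ℝ (1 − cos u) / |u|^{1+α} du, and this integral is finite and strictly positive. -/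
/-- The normalizing constant `s* = Σ_{x∈ℤ, x≠0} |x|^{-(1+α)}` in dimension one. -/
noncomputable def sstar1 (α : ℝ) : ℝ :=
  ∑' x : ℤ, if x = 0 then 0 else |(x : ℝ)| ^ (-(1 + α))

/-- The step distribution `s(x) = |x|^{-(1+α)}/s*` on `ℤ`, `s(0) = 0`. -/
noncomputable def sfun1 (α : ℝ) (x : ℤ) : ℝ :=
  if x = 0 then 0 else |(x : ℝ)| ^ (-(1 + α)) / sstar1 α

/-- The characteristic function `φ(θ) = Σ_{x≠0} cos(θx) s(x)`. -/
noncomputable def phi1 (α : ℝ) (θ : ℝ) : ℝ :=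
  ∑' x : ℤ, Real.cos (θ * x) * sfun1 α x

/-!
Write `f(u) = (1 - cos u) / |u|^(1+α)`. Substituting `u = |θ| x` turns `(1 - φ(θ)) / |θ|^α` into
`s*⁻¹ · Σ_{n ∈ ℤ} |θ| f(|θ| n)`, a Riemann sum of `f` with mesh `|θ|`. For `α ≤ 1` the kernel is
bounded near `0` (by `|u|^(1-α)/2`) and decays like `|u|^(-(1+α))`, so it is dominated by a multiple
of `(1 + |u|)^(-(1+α))`. The Riemann sum is the integral of the step function `u ↦ f(t ⌊u/t⌋)`,
which stays under a dilate of that integrable majorant, and dominated convergence gives the limit.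
-/

open MeasureTheory Filter Set Topology

section RiemannSum

variable {E : Type*} [NormedAddCommGroup E] [NormedSpace ℝ E] [CompleteSpace E]

lemma mul_floor_div_mem_Ioc {t : ℝ} (ht : 0 < t) (u : ℝ) : t * ⌊u / t⌋ ∈ Ioc (u - t) u := by
  have hle := Int.floor_le (u / t)
  have hlt := Int.lt_floor_add_one (u / t)
  rw [le_div_iff₀ ht] at hle
  rw [div_lt_iff₀ ht] at hlt
  constructor <;> linarith

lemma abs_mul_floor_div_sub_le {t : ℝ} (ht : 0 < t) (u : ℝ) : |t * ⌊u / t⌋ - u| ≤ t := by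
  obtain ⟨h₁, h₂⟩ := mul_floor_div_mem_Ioc ht u
  rw [abs_le]; constructor <;> linarith

lemma tendsto_mul_floor_div (u : ℝ) : Tendsto (fun t : ℝ => t * ⌊u / t⌋) (𝓝[>] 0) (𝓝 u) := by
  have hlow : Tendsto (fun t : ℝ => u - t) (𝓝[>] 0) (𝓝 u) := by
    simpa using (tendsto_const_nhds (x := u)).sub
      (tendsto_nhdsWithin_of_tendsto_nhds (tendsto_id (x := 𝓝 (0 : ℝ))))
  refine tendsto_of_tendsto_of_tendsto_of_le_of_le' hlow tendsto_const_nhds ?_ ?_ <;>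
    filter_upwards [self_mem_nhdsWithin] with t ht
  exacts [(mul_floor_div_mem_Ioc ht u).1.le, (mul_floor_div_mem_Ioc ht u).2]

lemma floor_div_eq_of_mem_Ico {t u : ℝ} (ht : 0 < t) {n : ℤ} (hu : u ∈ Ico (n • t) ((n + 1) • t)) :
    ⌊u / t⌋ = n := by
  rw [Int.floor_eq_iff, le_div_iff₀ ht, div_lt_iff₀ ht]
  simpa [zsmul_eq_mul] using hu

lemma hasSum_smul_integral_comp_mul_floor_div {f : ℝ → E} {t : ℝ} (ht : 0 < t)
    (hf : Integrable fun u => f (t * ⌊u / t⌋)) :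
    HasSum (fun n : ℤ => t • f (t * n)) (∫ u, f (t * ⌊u / t⌋)) := by
  have hcells := hasSum_integral_iUnion (fun n : ℤ => measurableSet_Ico)
    (pairwise_disjoint_Ico_zsmul t) (by rw [iUnion_Ico_zsmul ht]; exact hf.integrableOn)
  rw [iUnion_Ico_zsmul ht, Measure.restrict_univ] at hcells
  convert hcells using 2 with n
  rw [setIntegral_congr_fun measurableSet_Ico fun u hu => by rw [floor_div_eq_of_mem_Ico ht hu],
    setIntegral_const, measureReal_def, Real.volume_Ico, ENNReal.toReal_ofReal] <;>
    rw [add_smul, one_smul]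
  · rw [add_sub_cancel_left]
  · linarith

lemma one_add_abs_rpow_neg_le {s u v : ℝ} (hs : 0 ≤ s) (h : |v - u| ≤ 1) :
    (1 + |v|) ^ (-s) ≤ 2 ^ s * (1 + |u|) ^ (-s) := by
  have hu : (1 + |u|) / 2 ≤ 1 + |v| := by
    have := abs_sub_abs_le_abs_sub u v
    rw [abs_sub_comm] at this
    linarith [abs_nonneg v]
  calc (1 + |v|) ^ (-s) ≤ ((1 + |u|) / 2) ^ (-s) :=
        Real.rpow_le_rpow_of_nonpos (by positivity) hu (by linarith)
    _ = 2 ^ s * (1 + |u|) ^ (-s) := by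
        rw [Real.div_rpow (by positivity) zero_le_two, Real.rpow_neg zero_le_two, div_inv_eq_mul,
          mul_comm]

theorem tendsto_tsum_smul_mul_integral {f : ℝ → E} {C s : ℝ} (hs : 1 < s)
    (hf : StronglyMeasurable f) (hbound : ∀ v, ‖f v‖ ≤ C * (1 + |v|) ^ (-s))
    (hcont : ∀ᵐ u, ContinuousAt f u) :
    Tendsto (fun t : ℝ => ∑' n : ℤ, t • f (t * n)) (𝓝[>] 0) (𝓝 (∫ u, f u)) := by
  have hC : 0 ≤ C := by simpa using (norm_nonneg _).trans (hbound 0)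
  have hg : Integrable fun u : ℝ => C * (2 ^ s * (1 + |u|) ^ (-s)) :=
    ((integrable_one_add_norm (r := s) (by simpa using hs)).const_mul _).const_mul _
  have hmeas (t : ℝ) : AEStronglyMeasurable fun u => f (t * ⌊u / t⌋) :=
    (hf.comp_measurable (by fun_prop)).aestronglyMeasurable
  have hdom : ∀ t ∈ Ioc (0 : ℝ) 1, ∀ u, ‖f (t * ⌊u / t⌋)‖ ≤ C * (2 ^ s * (1 + |u|) ^ (-s)) :=
    fun t ht u => (hbound _).trans <| by
      gcongr
      exact one_add_abs_rpow_neg_le (by linarith) ((abs_mul_floor_div_sub_le ht.1 u).trans ht.2)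
  refine (tendsto_integral_filter_of_dominated_convergence _ (.of_forall hmeas)
    (eventually_of_mem (Ioc_mem_nhdsGT one_pos) fun t ht => .of_forall (hdom t ht)) hg
    (hcont.mono fun u hu => hu.tendsto.comp (tendsto_mul_floor_div u))).congr' ?_
  filter_upwards [Ioc_mem_nhdsGT one_pos] with t ht
  exact (hasSum_smul_integral_comp_mul_floor_div ht.1
    (hg.mono' (hmeas t) (.of_forall (hdom t ht)))).tsum_eq.symm

end RiemannSum

noncomputable def stableKernel (α u : ℝ) : ℝ := (1 - Real.cos u) / |u| ^ (1 + α)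

namespace stableKernel

variable {α : ℝ}

lemma nonneg (α u : ℝ) : 0 ≤ stableKernel α u :=
  div_nonneg (sub_nonneg.2 (Real.cos_le_one u)) (by positivity)

lemma le_rpow_one_sub (α v : ℝ) : stableKernel α v ≤ |v| ^ (1 - α) / 2 := by
  rcases eq_or_ne v 0 with rfl | hv
  · simp [stableKernel]; positivity
  have hv' : 0 < |v| := abs_pos.2 hv
  calc stableKernel α v ≤ |v| ^ (2 : ℝ) / 2 / |v| ^ (1 + α) := by
        rw [Real.rpow_two, sq_abs]
        unfold stableKernel
        gcongr
        linarith [Real.one_sub_sq_div_two_le_cos (x := v)]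
    _ = |v| ^ (1 - α) / 2 := by
        rw [div_right_comm, ← Real.rpow_sub hv']
        ring_nf

lemma le_two_mul_rpow_neg (α v : ℝ) : stableKernel α v ≤ 2 * |v| ^ (-(1 + α)) := by
  rcases eq_or_ne v 0 with rfl | hv
  · simp [stableKernel]; positivity
  rw [Real.rpow_neg (abs_nonneg v), ← div_eq_mul_inv]
  unfold stableKernel
  gcongr
  linarith [Real.neg_one_le_cos v]

lemma norm_le_one_add_abs_rpow_neg (hα0 : 0 < α) (hα1 : α ≤ 1) (v : ℝ) :
    ‖stableKernel α v‖ ≤ 8 * (1 + |v|) ^ (-(1 + α)) := by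
  rw [Real.norm_of_nonneg (nonneg α v)]
  rcases le_total |v| 1 with hv | hv
  · have hpow : (1 / 4 : ℝ) ≤ (1 + |v|) ^ (-(1 + α)) :=
      calc (1 / 4 : ℝ) = 2 ^ (-2 : ℝ) := by norm_num [Real.rpow_neg]
        _ ≤ 2 ^ (-(1 + α)) := Real.rpow_le_rpow_of_exponent_le one_le_two (by linarith)
        _ ≤ (1 + |v|) ^ (-(1 + α)) :=
          Real.rpow_le_rpow_of_nonpos (by positivity) (by linarith) (by linarith)
    have hker : |v| ^ (1 - α) ≤ 1 := Real.rpow_le_one (abs_nonneg v) hv (by linarith)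
    linarith [le_rpow_one_sub α v]
  · have hpow : |v| ^ (-(1 + α)) ≤ 4 * (1 + |v|) ^ (-(1 + α)) :=
      calc |v| ^ (-(1 + α)) = 2 ^ (1 + α) * (2 * |v|) ^ (-(1 + α)) := by
            rw [Real.mul_rpow zero_le_two (abs_nonneg v), ← mul_assoc, ← Real.rpow_add two_pos,
              add_neg_cancel, Real.rpow_zero, one_mul]
        _ ≤ 4 * (1 + |v|) ^ (-(1 + α)) := by
            refine mul_le_mul ?_ ?_ (by positivity) (by norm_num)
            · calc (2 : ℝ) ^ (1 + α) ≤ 2 ^ (2 : ℝ) :=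
                    Real.rpow_le_rpow_of_exponent_le one_le_two (by linarith)
                _ = 4 := by norm_num
            · exact Real.rpow_le_rpow_of_nonpos (by positivity) (by linarith) (by linarith)
    linarith [le_two_mul_rpow_neg α v]

lemma measurable (α : ℝ) : Measurable (stableKernel α) := by
  unfold stableKernel
  fun_prop

lemma continuousAt {u : ℝ} (hu : u ≠ 0) : ContinuousAt (stableKernel α) u :=
  (continuous_const.sub Real.continuous_cos).continuousAt.div
    (continuous_abs.continuousAt.rpow_const (.inl (abs_ne_zero.2 hu)))
    (Real.rpow_pos_of_pos (abs_pos.2 hu) _).ne'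

lemma integrable (hα0 : 0 < α) (hα1 : α ≤ 1) : Integrable (stableKernel α) := by
  exact ((integrable_one_add_norm (r := 1 + α) (by simpa using hα0)).const_mul 8).mono'
    (measurable α).aestronglyMeasurable (.of_forall (norm_le_one_add_abs_rpow_neg hα0 hα1))

lemma integral_pos (hα0 : 0 < α) (hα1 : α ≤ 1) : 0 < ∫ u, stableKernel α u := by
  rw [integral_pos_iff_support_of_nonneg (nonneg α) (integrable hα0 hα1)]
  have hsupp : Ioo 0 Real.pi ⊆ Function.support (stableKernel α) := fun u hu =>
    (div_pos (sub_pos.2 (by simpa using Real.cos_lt_cos_of_nonneg_of_le_pi le_rfl hu.2.le hu.1))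
      (by positivity [hu.1.ne'])).ne'
  exact (by simp [Real.pi_pos] : (0 : ENNReal) < volume (Ioo 0 Real.pi)).trans_le
    (measure_mono hsupp)

end stableKernel

lemma abs_mul_stableKernel_abs_mul {α θ : ℝ} (hθ : θ ≠ 0) (y : ℝ) :
    |θ| * stableKernel α (|θ| * y) = (1 - Real.cos (θ * y)) * |y| ^ (-(1 + α)) / |θ| ^ α := by
  have hθ' : 0 < |θ| := abs_pos.2 hθ
  have hcos : Real.cos (|θ| * y) = Real.cos (θ * y) := by
    rcases abs_choice θ with h | h <;> simp [h]
  rcases eq_or_ne y 0 with rfl | hy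
  · simp [stableKernel]
  have hy' : 0 < |y| := abs_pos.2 hy
  rw [stableKernel, hcos, abs_mul, abs_abs, Real.mul_rpow hθ'.le hy'.le, Real.rpow_add hθ',
    Real.rpow_one, Real.rpow_neg hy'.le]
  field_simp

section CharacteristicFunction

variable {α : ℝ}

lemma sstar1_eq_tsum (hα0 : 0 < α) : sstar1 α = ∑' x : ℤ, |(x : ℝ)| ^ (-(1 + α)) :=
  tsum_congr fun x => by
    rcases eq_or_ne x 0 with rfl | hx
    · rw [if_pos rfl, Int.cast_zero, abs_zero, Real.zero_rpow (by linarith)]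
    · rw [if_neg hx]

lemma sstar1_pos (hα0 : 0 < α) : 0 < sstar1 α := by
  rw [sstar1_eq_tsum hα0]
  exact (Real.summable_abs_int_rpow (by linarith)).tsum_pos (fun _ => by positivity) 1 (by simp)

lemma sfun1_eq (hα0 : 0 < α) (x : ℤ) : sfun1 α x = |(x : ℝ)| ^ (-(1 + α)) / sstar1 α := by
  unfold sfun1
  rcases eq_or_ne x 0 with rfl | hx
  · rw [if_pos rfl, Int.cast_zero, abs_zero, Real.zero_rpow (by linarith), zero_div]
  · rw [if_neg hx]

lemma sfun1_nonneg (hα0 : 0 < α) (x : ℤ) : 0 ≤ sfun1 α x := by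
  rw [sfun1_eq hα0]
  exact div_nonneg (by positivity) (sstar1_pos hα0).le

lemma hasSum_sfun1 (hα0 : 0 < α) : HasSum (sfun1 α) 1 := by
  have := ((Real.summable_abs_int_rpow (b := 1 + α) (by linarith)).hasSum.div_const (sstar1 α))
  rwa [← sstar1_eq_tsum hα0, div_self (sstar1_pos hα0).ne', ← funext (sfun1_eq hα0)] at this

lemma hasSum_one_sub_phi1 (hα0 : 0 < α) (θ : ℝ) :
    HasSum (fun x : ℤ => (1 - Real.cos (θ * x)) * sfun1 α x) (1 - phi1 α θ) := by
  have hcos : Summable fun x : ℤ => Real.cos (θ * x) * sfun1 α x :=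
    (hasSum_sfun1 hα0).summable.of_norm_bounded fun x => by
      rw [norm_mul, Real.norm_of_nonneg (sfun1_nonneg hα0 x)]
      exact mul_le_of_le_one_left (sfun1_nonneg hα0 x) (Real.abs_cos_le_one _)
  simpa only [phi1, sub_mul, one_mul] using (hasSum_sfun1 hα0).sub hcos.hasSum

lemma one_sub_phi1_div {θ : ℝ} (hα0 : 0 < α) (hθ : θ ≠ 0) :
    (1 - phi1 α θ) / |θ| ^ α = (sstar1 α)⁻¹ * ∑' n : ℤ, |θ| • stableKernel α (|θ| * n) := by
  rw [← ((hasSum_one_sub_phi1 hα0 θ).div_const (|θ| ^ α)).tsum_eq, ← tsum_mul_left]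
  refine tsum_congr fun n => ?_
  rw [smul_eq_mul, abs_mul_stableKernel_abs_mul hθ, sfun1_eq hα0]
  ring

end CharacteristicFunction

/-- for `d = 1` and `0 < α ≤ 1`,
`lim_{θ→0} (1 − φ(θ))/|θ|^α = (1/s*) ∫_ℝ (1 − cos u)/|u|^{1+α} du`, the integral being
finite and strictly positive. -/
theorem statement11 (α : ℝ) (hα0 : 0 < α) (hα1 : α ≤ 1) :
    (MeasureTheory.Integrable fun u : ℝ => (1 - Real.cos u) / |u| ^ (1 + α)) ∧
    (0 < ∫ u : ℝ, (1 - Real.cos u) / |u| ^ (1 + α)) ∧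
    Filter.Tendsto (fun θ : ℝ => (1 - phi1 α θ) / |θ| ^ α)
      (nhdsWithin 0 {(0 : ℝ)}ᶜ)
      (nhds ((sstar1 α)⁻¹ * ∫ u : ℝ, (1 - Real.cos u) / |u| ^ (1 + α))) := by
  refine ⟨stableKernel.integrable hα0 hα1, stableKernel.integral_pos hα0 hα1, ?_⟩
  have hriemann := tendsto_tsum_smul_mul_integral (by linarith : 1 < 1 + α)
    (stableKernel.measurable α).stronglyMeasurable
    (stableKernel.norm_le_one_add_abs_rpow_neg hα0 hα1)
    ((volume.ae_ne 0).mono fun u hu => stableKernel.continuousAt hu)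
  refine ((hriemann.const_mul (sstar1 α)⁻¹).comp tendsto_abs_nhdsNE_zero).congr' ?_
  filter_upwards [self_mem_nhdsWithin] with θ hθ
  exact (one_sub_phi1_div hα0 hθ).symm
end

section
/- Let d ≥ 1 and n ≥ 1. Let 𝔣 : ℰ_{d,n} → ℝ be finitely supported, and define F : ℤ^d \ {0} → [0,∞) by F(z) = ( Σ_{A∈ℰ_{d,n}, z∈A} 𝔣(A)² )^{1/2}. Then for all distinct nonzero x, y ∈ ℤ^d, (F(y) − F(x))² ≤ Σ_{A∈ℰ_{d,n}, x∈A, y∉A} ( 𝔣((A \ {x}) ∪ {y}) − 𝔣(A) )². -/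
/-!
The transposition `σ` of `x` and `y` fixes `0`, so it permutes the admissible sets. After
reindexing along `σ`, `F(y)` is the `ℓ²`-norm of `A ↦ [x ∈ A] 𝔣(σ A)` and `F(x)` that of
`A ↦ [x ∈ A] 𝔣(A)`. Their difference vanishes unless `x ∈ A` and `y ∉ A`, in which case
`σ A = (A \ {x}) ∪ {y}`; the claim is then the reverse triangle inequality in `ℓ²`.
-/

open Finset

theorem Finset.sq_sqrt_sum_sq_sub_le_sum_sq_sub {ι : Type*} (s : Finset ι) (u v : ι → ℝ) :
    (√(∑ i ∈ s, u i ^ 2) - √(∑ i ∈ s, v i ^ 2)) ^ 2 ≤ ∑ i ∈ s, (u i - v i) ^ 2 := by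
  let toL2 (w : ι → ℝ) : EuclideanSpace ℝ s := WithLp.toLp 2 fun i => w i
  have hnorm (w : ι → ℝ) : ‖toL2 w‖ = √(∑ i ∈ s, w i ^ 2) := by
    simp [toL2, EuclideanSpace.norm_eq, Finset.sum_attach s (fun i => w i ^ 2)]
  have key : |‖toL2 u‖ - ‖toL2 v‖| ≤ ‖toL2 (u - v)‖ := abs_norm_sub_norm_le _ _
  rw [hnorm, hnorm, hnorm] at key
  calc _ ≤ √(∑ i ∈ s, (u - v) i ^ 2) ^ 2 := sq_le_sq' (abs_le.1 key).1 (abs_le.1 key).2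
    _ = _ := Real.sq_sqrt (by positivity)

theorem sq_sqrt_tsum_sq_sub_le_tsum_sq_sub {ι : Type*} {u v : ι → ℝ}
    (hu : u.support.Finite) (hv : v.support.Finite) :
    (√(∑' i, u i ^ 2) - √(∑' i, v i ^ 2)) ^ 2 ≤ ∑' i, (u i - v i) ^ 2 := by
  classical
  let s := hu.toFinset ∪ hv.toFinset
  have hs : ∀ i ∉ s, u i = 0 ∧ v i = 0 := by simp [s]
  rw [tsum_eq_sum (s := s) fun i hi => by simp [(hs i hi).1],
    tsum_eq_sum (s := s) fun i hi => by simp [(hs i hi).2],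
    tsum_eq_sum (s := s) fun i hi => by simp [hs i hi]]
  exact s.sq_sqrt_sum_sq_sub_le_sum_sq_sub u v

section SwapFinset

variable {α : Type*} [DecidableEq α] {x y : α} {A : Finset α}

theorem Finset.map_swap_eq_self_of_iff (h : x ∈ A ↔ y ∈ A) :
    A.map (Equiv.swap x y).toEmbedding = A := by
  ext z
  rw [mem_map_equiv, Equiv.symm_swap, Equiv.swap_apply_def]
  split_ifs <;> grind

theorem Finset.map_swap_of_mem_of_notMem (hx : x ∈ A) (hy : y ∉ A) :
    A.map (Equiv.swap x y).toEmbedding = insert y (A.erase x) := by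
  ext z
  rw [mem_map_equiv, Equiv.symm_swap, Equiv.swap_apply_def, mem_insert, mem_erase]
  split_ifs <;> grind

theorem sq_ite_mem_map_swap_sub_ite_mem (f : Finset α → ℝ) (x y : α) (A : Finset α) :
    ((if y ∈ A.map (Equiv.swap x y).toEmbedding then f (A.map (Equiv.swap x y).toEmbedding)
        else 0) - if x ∈ A then f A else 0) ^ 2
      = if x ∈ A ∧ y ∉ A then (f (insert y (A.erase x)) - f A) ^ 2 else 0 := by
  by_cases hxA : x ∈ A
  · by_cases hyA : y ∈ A
    · simp [hxA, hyA, map_swap_eq_self_of_iff (iff_of_true hxA hyA)]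
    · simp [hxA, hyA, map_swap_of_mem_of_notMem hxA hyA]
  · simp [hxA]

end SwapFinset

theorem statement19_general (d n : ℕ)
    (f : Finset (Fin d → ℤ) → ℝ) (hf : (Function.support f).Finite)
    (x y : Fin d → ℤ) (hx : x ≠ 0) (hy : y ≠ 0) :
    (Real.sqrt (∑' A : {A : Finset (Fin d → ℤ) // A.card = n ∧ (0 : Fin d → ℤ) ∉ A},
        (if y ∈ A.1 then f A.1 ^ 2 else 0))
      - Real.sqrt (∑' A : {A : Finset (Fin d → ℤ) // A.card = n ∧ (0 : Fin d → ℤ) ∉ A},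
        (if x ∈ A.1 then f A.1 ^ 2 else 0))) ^ 2
    ≤ ∑' A : {A : Finset (Fin d → ℤ) // A.card = n ∧ (0 : Fin d → ℤ) ∉ A},
        (if x ∈ A.1 ∧ y ∉ A.1 then (f (insert y (A.1.erase x)) - f A.1) ^ 2 else 0) := by
  let S := {A : Finset (Fin d → ℤ) // A.card = n ∧ (0 : Fin d → ℤ) ∉ A}
  have hswap0 : Equiv.swap x y 0 = 0 := Equiv.swap_apply_of_ne_of_ne hx.symm hy.symm
  let σ : S ≃ S := (Equiv.swap x y).finsetCongr.subtypeEquiv fun A => by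
    simp [Equiv.finsetCongr_apply, mem_map_equiv, hswap0]
  let g (z : Fin d → ℤ) (A : S) : ℝ := if z ∈ A.1 then f A.1 else 0
  have hg (z : Fin d → ℤ) : (g z).support.Finite :=
    (hf.preimage Subtype.val_injective.injOn).subset <| Function.support_subset_iff'.2
      fun A hA => by simp [g, Function.notMem_support.1 hA]
  calc _ = (√(∑' A, g y (σ A) ^ 2) - √(∑' A, g x A ^ 2)) ^ 2 := by
        rw [σ.tsum_eq fun A => g y A ^ 2]
        simp only [g, ite_pow, zero_pow two_ne_zero]
        rfl
    _ ≤ ∑' A, (g y (σ A) - g x A) ^ 2 :=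
        sq_sqrt_tsum_sq_sub_le_tsum_sq_sub ((hg y).preimage σ.injective.injOn) (hg x)
    _ = _ := tsum_congr fun A => sq_ite_mem_map_swap_sub_ite_mem f x y A.1

/-- with `F(z) = (Σ_{A∈ℰ_{d,n}, z∈A} 𝔣(A)²)^{1/2}`, for distinct nonzero
`x, y ∈ ℤ^d` one has
`(F(y) − F(x))² ≤ Σ_{A∈ℰ_{d,n}, x∈A, y∉A} (𝔣((A \ {x}) ∪ {y}) − 𝔣(A))²`. -/
theorem statement19 (d n : ℕ) (hd : 1 ≤ d) (hn : 1 ≤ n)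
    (f : Finset (Fin d → ℤ) → ℝ) (hf : (Function.support f).Finite)
    (x y : Fin d → ℤ) (hx : x ≠ 0) (hy : y ≠ 0) (hxy : x ≠ y) :
    (Real.sqrt (∑' A : {A : Finset (Fin d → ℤ) // A.card = n ∧ (0 : Fin d → ℤ) ∉ A},
        (if y ∈ A.1 then f A.1 ^ 2 else 0))
      - Real.sqrt (∑' A : {A : Finset (Fin d → ℤ) // A.card = n ∧ (0 : Fin d → ℤ) ∉ A},
        (if x ∈ A.1 then f A.1 ^ 2 else 0))) ^ 2
    ≤ ∑' A : {A : Finset (Fin d → ℤ) // A.card = n ∧ (0 : Fin d → ℤ) ∉ A},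
        (if x ∈ A.1 ∧ y ∉ A.1 then (f (insert y (A.1.erase x)) - f A.1) ^ 2 else 0) :=
  statement19_general d n f hf x y hx hy
end
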